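/- Let f ∈ BUC(ℝ,X) and let u ∈ BUC(ℝ,X) be a mild solution on ℝ of the equation du/dt = Au + F(t)u_t + f(t). Then u belongs to the set of strong continuity of the associated evolution semigroup, i.e., sup_{t∈ℝ} ‖T(h)u(t−h) − u(t)‖ → 0 as h → 0⁺. -/
import Mathlib


open Set MeasureTheory intervalIntegral
open scoped BoundedContinuousFunction ZeroAtInfty

noncomputable section

/-- `T` is a strongly continuous semigroup of bounded linear operators with
`‖T t‖ ≤ N * exp (ω * t)`. -/
def IsC0Semigroup {X : Type*} [NormedAddCommGroup X] [NormedSpace ℂ X]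
    (T : ℝ → X →L[ℂ] X) (N ω : ℝ) : Prop :=
  T 0 = 1 ∧ (∀ a b : ℝ, 0 ≤ a → 0 ≤ b → T (a + b) = (T a).comp (T b)) ∧
    (∀ x : X, ContinuousOn (fun t : ℝ => T t x) (Set.Ici (0:ℝ))) ∧
    0 < N ∧ 0 < ω ∧ ∀ t : ℝ, 0 ≤ t → ‖T t‖ ≤ N * Real.exp (ω * t)

/-- The phase space `C_r = C([-r, 0], X)` segment `u_t` of a continuous function
`u : ℝ → X`, given by `u_t (θ) = u (t + θ)`. -/
def seg {X : Type*} [NormedAddCommGroup X] (r : ℝ) (u : C(ℝ, X)) (t : ℝ) :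
    C(Set.Icc (-r) (0:ℝ), X) :=
  u.comp ⟨fun θ => t + θ.1, by fun_prop⟩

/-- `F : ℝ → L(C_r, X)` is `1`-periodic, strongly continuous and uniformly bounded. -/
def PeriodicFamily {X : Type*} [NormedAddCommGroup X] [NormedSpace ℂ X] (r : ℝ)
    (F : ℝ → (C(Set.Icc (-r) (0:ℝ), X) →L[ℂ] X)) : Prop :=
  (∀ t : ℝ, F (t + 1) = F t) ∧ (∀ φ, Continuous fun t : ℝ => F t φ) ∧
    ∃ C : ℝ, ∀ t : ℝ, ‖F t‖ ≤ C

/-- `u` is a mild solution on `ℝ` of `du/dt = A u + F(t) u_t + f(t)`: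
`u t = T (t-s) (u s) + ∫_s^t T (t-ξ) [F ξ (u_ξ) + f ξ] dξ` for all `t ≥ s`. -/
def IsMildSolution {X : Type*} [NormedAddCommGroup X] [NormedSpace ℂ X] [CompleteSpace X]
    (T : ℝ → X →L[ℂ] X) (r : ℝ)
    (F : ℝ → (C(Set.Icc (-r) (0:ℝ), X) →L[ℂ] X)) (f : ℝ → X) (u : C(ℝ, X)) : Prop :=
  ∀ s t : ℝ, s ≤ t →
    u t = T (t - s) (u s) + ∫ ξ in s..t, T (t - ξ) (F ξ (seg r u ξ) + f ξ)

/-- Every bounded uniformly continuous mild solution `u` of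
`du/dt = A u + F(t) u_t + f(t)` belongs to the set of strong continuity of the evolution
semigroup `(T^h g)(t) = T(h) g(t - h)`: `sup_t ‖T(h) u(t-h) - u(t)‖ → 0` as `h → 0⁺`. -/
theorem mild_solution_mem_strong_continuity_set {X : Type*} [NormedAddCommGroup X] [NormedSpace ℂ X] [CompleteSpace X]
    (T : ℝ → X →L[ℂ] X) (N ω : ℝ) (hT : IsC0Semigroup T N ω)
    (r : ℝ) (hr : 0 < r)
    (F : ℝ → (C(Set.Icc (-r) (0:ℝ), X) →L[ℂ] X)) (hF : PeriodicFamily r F)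
    (f : ℝ →ᵇ X) (hf : UniformContinuous ⇑f)
    (u : ℝ →ᵇ X) (hu : UniformContinuous ⇑u)
    (husol : IsMildSolution T r F (⇑f) u.toContinuousMap) :
    ∀ ε : ℝ, 0 < ε → ∃ δ : ℝ, 0 < δ ∧ ∀ h : ℝ, 0 < h → h < δ →
      ∀ t : ℝ, ‖T h (u (t - h)) - u t‖ ≤ ε := by
  obtain ⟨hT0, hTadd, hTcont, hN, hω, hTnorm⟩ := hT
  obtain ⟨hFper, hFcont, C, hC⟩ := hF
  have hC0 : 0 ≤ C := (norm_nonneg (F 0)).trans (hC 0)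
  set M : ℝ := N * Real.exp ω * (C * ‖u‖ + ‖f‖) with hM
  have hM0 : 0 ≤ M := by positivity
  intro ε hε
  refine ⟨min 1 (ε / (M + 1)), lt_min one_pos (by positivity), ?_⟩
  intro h hh hhδ t
  have hh1 : h < 1 := lt_of_lt_of_le hhδ (min_le_left _ _)
  have hh2 : h < ε / (M + 1) := lt_of_lt_of_le hhδ (min_le_right _ _)
  have hle : t - h ≤ t := by linarith
  have key := husol (t - h) t hle
  have ht : t - (t - h) = h := by ring
  rw [ht] at key
  have hseg : ∀ ξ : ℝ, ‖seg r u.toContinuousMap ξ‖ ≤ ‖u‖ := by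
    intro ξ
    haveI : Nonempty (Set.Icc (-r) (0:ℝ)) := ⟨⟨0, by constructor <;> linarith⟩⟩
    refine (ContinuousMap.norm_le _ (norm_nonneg u)).2 fun θ => ?_
    exact u.norm_coe_le_norm _
  have hbound : ∀ ξ ∈ Set.uIoc (t - h) t,
      ‖T (t - ξ) (F ξ (seg r u.toContinuousMap ξ) + f ξ)‖ ≤ M := by
    intro ξ hξ
    rw [Set.uIoc_of_le hle] at hξ
    have h1 : 0 ≤ t - ξ := by linarith [hξ.2]
    have h2 : ω * (t - ξ) ≤ ω := by nlinarith [hξ.1, hξ.2]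
    calc ‖T (t - ξ) (F ξ (seg r u.toContinuousMap ξ) + f ξ)‖
        ≤ ‖T (t - ξ)‖ * ‖F ξ (seg r u.toContinuousMap ξ) + f ξ‖ :=
          (T (t - ξ)).le_opNorm _
      _ ≤ (N * Real.exp ω) * (C * ‖u‖ + ‖f‖) := by
          apply mul_le_mul
          · calc ‖T (t - ξ)‖ ≤ N * Real.exp (ω * (t - ξ)) := hTnorm _ h1
              _ ≤ N * Real.exp ω := by
                  have := Real.exp_le_exp.2 h2
                  nlinarith
          · calc ‖F ξ (seg r u.toContinuousMap ξ) + f ξ‖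
                ≤ ‖F ξ (seg r u.toContinuousMap ξ)‖ + ‖f ξ‖ := norm_add_le _ _
              _ ≤ C * ‖u‖ + ‖f‖ := by
                  refine add_le_add ?_ (f.norm_coe_le_norm ξ)
                  calc ‖F ξ (seg r u.toContinuousMap ξ)‖
                      ≤ ‖F ξ‖ * ‖seg r u.toContinuousMap ξ‖ := (F ξ).le_opNorm _
                    _ ≤ C * ‖u‖ := mul_le_mul (hC ξ) (hseg ξ) (norm_nonneg _) hC0
          · exact norm_nonneg _
          · positivity
      _ = M := rfl
  have hint := intervalIntegral.norm_integral_le_of_norm_le_const hbound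
  have habs : |t - (t - h)| = h := by rw [ht]; exact abs_of_pos hh
  rw [habs] at hint
  have heq : T h (u (t - h)) - u t =
      -(∫ ξ in (t - h)..t, T (t - ξ) (F ξ (seg r u.toContinuousMap ξ) + f ξ)) := by
    have : (u t : X) = T h (u (t - h)) +
        ∫ ξ in (t - h)..t, T (t - ξ) (F ξ (seg r u.toContinuousMap ξ) + f ξ) := key
    rw [this]; abel
  rw [heq, norm_neg]
  calc ‖∫ ξ in (t - h)..t, T (t - ξ) (F ξ (seg r u.toContinuousMap ξ) + f ξ)‖
      ≤ M * h := hint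
    _ ≤ (M + 1) * h := by nlinarith
    _ ≤ ε := by
        rw [lt_div_iff₀ (by positivity)] at hh2
        nlinarith
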